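/- The group obtained from the presentation of G(Ẽ₇^{(1,1)}) by adding the quadratic relations g² = 1 for every generator t₀, t₁, s₁, …, s₇ is isomorphic to the group obtained from the presentation of G'(Ẽ₇^{(1,1)}) by adding the quadratic relations tᵢ² = 1 for all i ∈ ℤ and sⱼ² = 1 for j ∈ {1,…,7} (both present the hyperbolic elliptic Weyl group Hyp(Ẽ₇^{(1,1)})). -/

import Mathlib

/-!
STATEMENT 10: The group obtained from the presentation of G(Ẽ₇^{(1,1)}) by adding the
quadratic relations g² = 1 for every generator is isomorphic to the group obtained
from the presentation of G'(Ẽ₇^{(1,1)}) by adding the quadratic relations tᵢ² = 1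
(i ∈ ℤ) and sⱼ² = 1; both present Hyp(Ẽ₇^{(1,1)}).
-/

namespace EllipticE7Hyp

/-- Generators of `G(Ẽ₇^{(1,1)})`: `Sum.inl i` is `tᵢ` (`i ∈ {0,1}`),
`Sum.inr j` is `s_(j+1)` (so `Sum.inr 0` is `s₁`, ..., `Sum.inr 6` is `s₇`). -/
abbrev GenG : Type := Fin 2 ⊕ Fin 7

/-- Generators of `G'(Ẽ₇^{(1,1)})`: `Sum.inl i` is `tᵢ` (`i ∈ ℤ`),
`Sum.inr j` is `s_(j+1)`. -/
abbrev GenG' : Type := ℤ ⊕ Fin 7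

/-- The braid relator `(aba)⁻¹(bab)` encoding the relation `aba = bab`. -/
def br {α : Type} (a b : FreeGroup α) : FreeGroup α := (a * b * a)⁻¹ * (b * a * b)

/-- The commutation relator `(ab)⁻¹(ba)` encoding the relation `ab = ba`. -/
def cm {α : Type} (a b : FreeGroup α) : FreeGroup α := (a * b)⁻¹ * (b * a)

/-- The pairs of (0-indexed) `s`-generators joined by an edge in the diagram,
i.e. satisfying a braid relation: (s₂,s₄), (s₄,s₅), (s₃,s₆), (s₆,s₇). -/
def braidPairs : List (Fin 7 × Fin 7) := [(1, 3), (3, 4), (2, 5), (5, 6)]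

def tG (i : Fin 2) : FreeGroup GenG := FreeGroup.of (Sum.inl i)
def sG (j : Fin 7) : FreeGroup GenG := FreeGroup.of (Sum.inr j)

/-- Relators of the elliptic Dynkin presentation of `G(Ẽ₇^{(1,1)})`:
braid relations between `t₀, t₁` and `s₁, s₂, s₃`, braid relations along the edges
of the `s`-part of the diagram, the elliptic relations for `s₁, s₂, s₃`, and
commutation relations for all remaining pairs of distinct generators except `{t₀,t₁}`. -/
def relsG : Set (FreeGroup GenG) :=
  { r | (∃ i : Fin 2, ∃ j : Fin 7, j.val < 3 ∧ r = br (tG i) (sG j)) ∨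
        (∃ p ∈ braidPairs, r = br (sG p.1) (sG p.2)) ∨
        (∃ j : Fin 7, j.val < 3 ∧
          r = (sG j * tG 1 * tG 0 * sG j * tG 1 * tG 0)⁻¹ *
              (tG 1 * tG 0 * sG j * tG 1 * tG 0 * sG j)) ∨
        (∃ i j : Fin 7, i ≠ j ∧ (i, j) ∉ braidPairs ∧ (j, i) ∉ braidPairs ∧
          r = cm (sG i) (sG j)) ∨
        (∃ i : Fin 2, ∃ j : Fin 7, 3 ≤ j.val ∧ r = cm (tG i) (sG j)) }

def tG' (i : ℤ) : FreeGroup GenG' := FreeGroup.of (Sum.inl i)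
def sG' (j : Fin 7) : FreeGroup GenG' := FreeGroup.of (Sum.inr j)

/-- Relators of the new presentation of `G'(Ẽ₇^{(1,1)})`: braid relations between
every `tᵢ` (`i ∈ ℤ`) and `s₁, s₂, s₃`, the relations `tᵢtᵢ₋₁ = tⱼtⱼ₋₁`, braid relations
along the edges of the `s`-part of the diagram, commutation relations between the
remaining pairs of distinct `s`-generators, and commutation of every `tᵢ` with
`s₄, …, s₇`. -/
def relsG' : Set (FreeGroup GenG') :=
  { r | (∃ i : ℤ, ∃ j : Fin 7, j.val < 3 ∧ r = br (tG' i) (sG' j)) ∨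
        (∃ i j : ℤ, r = (tG' i * tG' (i - 1))⁻¹ * (tG' j * tG' (j - 1))) ∨
        (∃ p ∈ braidPairs, r = br (sG' p.1) (sG' p.2)) ∨
        (∃ i j : Fin 7, i ≠ j ∧ (i, j) ∉ braidPairs ∧ (j, i) ∉ braidPairs ∧
          r = cm (sG' i) (sG' j)) ∨
        (∃ i : ℤ, ∃ j : Fin 7, 3 ≤ j.val ∧ r = cm (tG' i) (sG' j)) }

/-- Relators of the `G`-presentation together with the quadratic relators `g² = 1`
for every generator. -/
def relsHypG : Set (FreeGroup GenG) :=
  relsG ∪ { r | ∃ x : GenG, r = (FreeGroup.of x) ^ 2 }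

/-- Relators of the `G'`-presentation together with the quadratic relators `tᵢ² = 1`
for all `i ∈ ℤ` and `sⱼ² = 1` for all `j`. -/
def relsHypG' : Set (FreeGroup GenG') :=
  relsG' ∪ { r | ∃ x : GenG', r = (FreeGroup.of x) ^ 2 }


/-!
Both isomorphisms are the obvious ones on `t₀, t₁, sⱼ`; in the other direction `tᵢ` must go to
`(t₁t₀)ⁱt₀`, since `tᵢ₊₁tᵢ = t₁t₀` and `tᵢ² = 1` force `tᵢ₊₁ = t₁t₀tᵢ`. These are the reflections
`rₖ` of the infinite dihedral group generated by `t₀, t₁`, and `rₘrₙrₘ = r₂ₘ₋ₙ`.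

Everything rests on one identity: for involutions `a, b, s` such that `s` braids with `a` and
with `b`, the involution `s` braids with `bab` if and only if `ba` commutes with `s(ba)s`, which is
the elliptic relation. Read backwards, it yields the elliptic relation in `G'` from the braid
relations of `s` with `t₀, t₁, t₂`. Read forwards, applied to `a = rₙ, b = rₘ`, it passes the braid
relation with `s` from `rₙ, rₘ` to `r₂ₘ₋ₙ`, so by induction from `r₀ = t₀, r₁ = t₁` to all `rₖ`.
-/

section Involutions

variable {G : Type*} [Group G] {a b s : G}

theorem braid_mul_mul_iff_commute (ha : a ^ 2 = 1) (hb : b ^ 2 = 1) (hs : s ^ 2 = 1)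
    (has : a * s * a = s * a * s) (hbs : b * s * b = s * b * s) :
    b * a * b * s * (b * a * b) = s * (b * a * b) * s ↔
      Commute (b * a) (s * (b * a) * s) := by
  have ha' : a⁻¹ = a := inv_eq_of_mul_eq_one_right (sq a ▸ ha)
  have hb' : b⁻¹ = b := inv_eq_of_mul_eq_one_right (sq b ▸ hb)
  have hs' : s⁻¹ = s := inv_eq_of_mul_eq_one_right (sq s ▸ hs)
  -- both sides of the braid relation for `b * a * b` are the two sides of the elliptic relation
  -- followed by `a * s * b`
  have lhs : b * a * b * s * (b * a * b) = b * a * (s * (b * a) * s) * (a * s * b) :=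
    calc b * a * b * s * (b * a * b) = b * a * (b * s * b) * a * b := by group
      _ = b * a * s * b * (s * a * s) * s⁻¹ * b := by rw [hbs]; group
      _ = b * a * (s * (b * a) * s) * (a * s * b) := by rw [← has, hs']; group
  have rhs : s * (b * a * b) * s = s * (b * a) * s * (b * a) * (a * s * b) :=
    calc s * (b * a * b) * s = s * b * a * (b * s * b) * b⁻¹ := by group
      _ = s * (b * a) * s * (b * a) * (a⁻¹ * s * b⁻¹) := by rw [hbs]; group
      _ = s * (b * a) * s * (b * a) * (a * s * b) := by rw [ha', hb']
  rw [lhs, rhs, mul_left_inj]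
  rfl

theorem eq_zpow_mul_of_succ_eq_mul {t : ℤ → G} {c : G} (h : ∀ i, t (i + 1) = c * t i) (i : ℤ) :
    t i = c ^ i * t 0 := by
  induction i using Int.induction_on with
  | zero => simp
  | succ i ih => rw [h, ih, ← mul_assoc, ← zpow_one_add, add_comm]
  | pred i ih =>
    rw [← inv_mul_eq_of_eq_mul (h (-i - 1)), sub_add_cancel, ih, ← mul_assoc, ← zpow_neg_one,
      ← zpow_add, neg_add_eq_sub]

def dihedralReflection (a b : G) (k : ℤ) : G := (b * a) ^ k * a

@[simp]
theorem dihedralReflection_zero (a b : G) : dihedralReflection a b 0 = a := by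
  simp [dihedralReflection]

theorem dihedralReflection_one (ha : a ^ 2 = 1) (b : G) : dihedralReflection a b 1 = b := by
  rw [dihedralReflection, zpow_one, mul_assoc, ← sq, ha, mul_one]

@[simp]
theorem map_dihedralReflection {H : Type*} [Group H] (f : G →* H) (a b : G) (k : ℤ) :
    f (dihedralReflection a b k) = dihedralReflection (f a) (f b) k := by
  simp [dihedralReflection]

theorem dihedralReflection_mul_dihedralReflection (ha : a ^ 2 = 1) (hb : b ^ 2 = 1) (m n : ℤ) :
    dihedralReflection a b m * dihedralReflection a b n = (b * a) ^ (m - n) := by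
  have ha' : a⁻¹ = a := inv_eq_of_mul_eq_one_right (sq a ▸ ha)
  have hb' : b⁻¹ = b := inv_eq_of_mul_eq_one_right (sq b ▸ hb)
  have hinv : (b * a)⁻¹ = a * b := by rw [mul_inv_rev, ha', hb']
  have hconj : a * (b * a) * a⁻¹ = (b * a)⁻¹ := by rw [hinv]; group
  calc dihedralReflection a b m * dihedralReflection a b n
      = (b * a) ^ m * (a * (b * a) * a⁻¹) ^ n := by
        rw [conj_zpow, ha']; simp only [dihedralReflection, mul_assoc]
    _ = (b * a) ^ (m - n) := by rw [hconj, inv_zpow', ← zpow_add, sub_eq_add_neg]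

theorem dihedralReflection_sq (ha : a ^ 2 = 1) (hb : b ^ 2 = 1) (k : ℤ) :
    dihedralReflection a b k ^ 2 = 1 := by
  rw [sq, dihedralReflection_mul_dihedralReflection ha hb, sub_self, zpow_zero]

theorem dihedralReflection_mul_mul (ha : a ^ 2 = 1) (hb : b ^ 2 = 1) (m n : ℤ) :
    dihedralReflection a b m * dihedralReflection a b n * dihedralReflection a b m =
      dihedralReflection a b (2 * m - n) := by
  rw [dihedralReflection_mul_dihedralReflection ha hb, dihedralReflection, dihedralReflection,
    ← mul_assoc, ← zpow_add]
  ring_nf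

theorem Commute.dihedralReflection_left (has : Commute a s) (hbs : Commute b s) (k : ℤ) :
    Commute (dihedralReflection a b k) s :=
  ((hbs.mul_left has).zpow_left k).mul_left has

theorem Commute.zpow_conj_of_sq_eq_one {c : G} (hs : s ^ 2 = 1) (h : Commute c (s * c * s))
    (m : ℤ) : Commute (c ^ m) (s * c ^ m * s) := by
  have hs' : s⁻¹ = s := inv_eq_of_mul_eq_one_right (sq s ▸ hs)
  have hconj : (s * c * s) ^ m = s * c ^ m * s := by simpa only [hs'] using conj_zpow (a := s)
  exact hconj ▸ h.zpow_zpow m m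

theorem dihedralReflection_two_mul_sub_braid (ha : a ^ 2 = 1) (hb : b ^ 2 = 1) (hs : s ^ 2 = 1)
    (helliptic : Commute (b * a) (s * (b * a) * s)) {m n : ℤ}
    (hm : dihedralReflection a b m * s * dihedralReflection a b m =
      s * dihedralReflection a b m * s)
    (hn : dihedralReflection a b n * s * dihedralReflection a b n =
      s * dihedralReflection a b n * s) :
    dihedralReflection a b (2 * m - n) * s * dihedralReflection a b (2 * m - n) =
      s * dihedralReflection a b (2 * m - n) * s := by
  rw [← dihedralReflection_mul_mul ha hb]
  refine (braid_mul_mul_iff_commute (dihedralReflection_sq ha hb n)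
    (dihedralReflection_sq ha hb m) hs hn hm).2 ?_
  rw [dihedralReflection_mul_dihedralReflection ha hb]
  exact Commute.zpow_conj_of_sq_eq_one hs helliptic _

theorem dihedralReflection_braid (ha : a ^ 2 = 1) (hb : b ^ 2 = 1) (hs : s ^ 2 = 1)
    (has : a * s * a = s * a * s) (hbs : b * s * b = s * b * s)
    (helliptic : Commute (b * a) (s * (b * a) * s)) (k : ℤ) :
    dihedralReflection a b k * s * dihedralReflection a b k =
      s * dihedralReflection a b k * s := by
  let P (k : ℤ) : Prop :=
    dihedralReflection a b k * s * dihedralReflection a b k = s * dihedralReflection a b k * s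
  suffices ∀ k, P k ∧ P (k + 1) from (this k).1
  intro k
  induction k using Int.induction_on with
  | zero => simpa [P, dihedralReflection_one ha] using ⟨has, hbs⟩
  | succ k ih =>
    have := dihedralReflection_two_mul_sub_braid ha hb hs helliptic ih.2 ih.1
    exact ⟨ih.2, by rwa [show 2 * ((k : ℤ) + 1) - k = k + 1 + 1 by ring] at this⟩
  | pred k ih =>
    have := dihedralReflection_two_mul_sub_braid ha hb hs helliptic ih.1 ih.2
    exact ⟨by rwa [show 2 * -(k : ℤ) - (-k + 1) = -k - 1 by ring] at this, by simpa using ih.1⟩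

end Involutions

section Relators

variable {α : Type} {rels : Set (FreeGroup α)}

theorem PresentedGroup.of_sq_eq_one_of_mem {x : α} (h : FreeGroup.of x ^ 2 ∈ rels) :
    (PresentedGroup.of x : PresentedGroup rels) ^ 2 = 1 := by
  rw [PresentedGroup.of, ← map_pow, PresentedGroup.one_of_mem h]

theorem PresentedGroup.braid_of_br_mem {x y : FreeGroup α} (h : br x y ∈ rels) :
    PresentedGroup.mk rels x * PresentedGroup.mk rels y * PresentedGroup.mk rels x =
      PresentedGroup.mk rels y * PresentedGroup.mk rels x * PresentedGroup.mk rels y := by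
  simpa only [map_mul] using PresentedGroup.mk_eq_mk_of_inv_mul_mem h

theorem PresentedGroup.commute_of_cm_mem {x y : FreeGroup α} (h : cm x y ∈ rels) :
    Commute (PresentedGroup.mk rels x) (PresentedGroup.mk rels y) :=
  (commute_iff_eq _ _).2 (by simpa only [map_mul] using PresentedGroup.mk_eq_mk_of_inv_mul_mem h)

end Relators

abbrev HypG : Type := PresentedGroup relsHypG
abbrev HypG' : Type := PresentedGroup relsHypG'

namespace HypG

def t (i : Fin 2) : HypG := .of (.inl i)
def s (j : Fin 7) : HypG := .of (.inr j)

theorem t_sq (i : Fin 2) : t i ^ 2 = 1 := PresentedGroup.of_sq_eq_one_of_mem (Or.inr ⟨_, rfl⟩)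

theorem s_sq (j : Fin 7) : s j ^ 2 = 1 := PresentedGroup.of_sq_eq_one_of_mem (Or.inr ⟨_, rfl⟩)

theorem t_braid_s (i : Fin 2) {j : Fin 7} (hj : j.val < 3) :
    t i * s j * t i = s j * t i * s j :=
  PresentedGroup.braid_of_br_mem (Or.inl (Or.inl ⟨i, j, hj, rfl⟩))

theorem s_braid_s {p : Fin 7 × Fin 7} (hp : p ∈ braidPairs) :
    s p.1 * s p.2 * s p.1 = s p.2 * s p.1 * s p.2 :=
  PresentedGroup.braid_of_br_mem (Or.inl (Or.inr (Or.inl ⟨p, hp, rfl⟩)))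

theorem commute_elliptic {j : Fin 7} (hj : j.val < 3) :
    Commute (t 1 * t 0) (s j * (t 1 * t 0) * s j) := by
  have h := PresentedGroup.mk_eq_mk_of_inv_mul_mem (rels := relsHypG)
    (Or.inl (Or.inr (Or.inr (Or.inl ⟨j, hj, rfl⟩))))
  simp only [map_mul] at h
  simp only [Commute, SemiconjBy, mul_assoc] at h ⊢
  exact h.symm

theorem s_commute_s {i j : Fin 7} (hne : i ≠ j) (hij : (i, j) ∉ braidPairs)
    (hji : (j, i) ∉ braidPairs) : Commute (s i) (s j) :=
  PresentedGroup.commute_of_cm_mem (Or.inl (Or.inr (Or.inr (Or.inr (Or.inl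
    ⟨i, j, hne, hij, hji, rfl⟩)))))

theorem t_commute_s (i : Fin 2) {j : Fin 7} (hj : 3 ≤ j.val) : Commute (t i) (s j) :=
  PresentedGroup.commute_of_cm_mem (Or.inl (Or.inr (Or.inr (Or.inr (Or.inr ⟨i, j, hj, rfl⟩)))))

end HypG

namespace HypG'

def t (i : ℤ) : HypG' := .of (.inl i)
def s (j : Fin 7) : HypG' := .of (.inr j)

theorem t_sq (i : ℤ) : t i ^ 2 = 1 := PresentedGroup.of_sq_eq_one_of_mem (Or.inr ⟨_, rfl⟩)

theorem s_sq (j : Fin 7) : s j ^ 2 = 1 := PresentedGroup.of_sq_eq_one_of_mem (Or.inr ⟨_, rfl⟩)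

theorem t_braid_s (i : ℤ) {j : Fin 7} (hj : j.val < 3) :
    t i * s j * t i = s j * t i * s j :=
  PresentedGroup.braid_of_br_mem (Or.inl (Or.inl ⟨i, j, hj, rfl⟩))

theorem t_mul_t_sub_one (i j : ℤ) : t i * t (i - 1) = t j * t (j - 1) := by
  have h := PresentedGroup.mk_eq_mk_of_inv_mul_mem (rels := relsHypG')
    (Or.inl (Or.inr (Or.inl ⟨i, j, rfl⟩)))
  simp only [map_mul] at h
  exact h

theorem s_braid_s {p : Fin 7 × Fin 7} (hp : p ∈ braidPairs) :
    s p.1 * s p.2 * s p.1 = s p.2 * s p.1 * s p.2 :=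
  PresentedGroup.braid_of_br_mem (Or.inl (Or.inr (Or.inr (Or.inl ⟨p, hp, rfl⟩))))

theorem s_commute_s {i j : Fin 7} (hne : i ≠ j) (hij : (i, j) ∉ braidPairs)
    (hji : (j, i) ∉ braidPairs) : Commute (s i) (s j) :=
  PresentedGroup.commute_of_cm_mem (Or.inl (Or.inr (Or.inr (Or.inr (Or.inl
    ⟨i, j, hne, hij, hji, rfl⟩)))))

theorem t_commute_s (i : ℤ) {j : Fin 7} (hj : 3 ≤ j.val) : Commute (t i) (s j) :=
  PresentedGroup.commute_of_cm_mem (Or.inl (Or.inr (Or.inr (Or.inr (Or.inr ⟨i, j, hj, rfl⟩)))))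

theorem t_add_one (i : ℤ) : t (i + 1) = t 1 * t 0 * t i := by
  have h := t_mul_t_sub_one (i + 1) 1
  rw [add_sub_cancel_right, sub_self] at h
  rw [← h, mul_assoc, ← sq, t_sq, mul_one]

theorem t_eq_dihedralReflection (i : ℤ) : t i = dihedralReflection (t 0) (t 1) i :=
  eq_zpow_mul_of_succ_eq_mul t_add_one i

theorem commute_elliptic {j : Fin 7} (hj : j.val < 3) :
    Commute (t 1 * t 0) (s j * (t 1 * t 0) * s j) :=
  (braid_mul_mul_iff_commute (t_sq 0) (t_sq 1) (s_sq j) (t_braid_s 0 hj) (t_braid_s 1 hj)).1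
    (t_add_one 1 ▸ t_braid_s (1 + 1) hj)

end HypG'

def toHypG'OnGen : GenG → HypG' := Sum.elim (fun i => HypG'.t i) HypG'.s

theorem lift_toHypG'OnGen_eq_one : ∀ r ∈ relsHypG, FreeGroup.lift toHypG'OnGen r = 1 := by
  rintro r ((⟨i, j, hj, rfl⟩ | ⟨p, hp, rfl⟩ | ⟨j, hj, rfl⟩ | ⟨i, j, hne, hij, hji, rfl⟩ |
    ⟨i, j, hj, rfl⟩) | ⟨i | j, rfl⟩) <;>
    simp only [br, cm, tG, sG, map_mul, map_inv, map_pow, FreeGroup.lift_apply_of,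
      toHypG'OnGen, Sum.elim_inl, Sum.elim_inr, inv_mul_eq_one, Fin.val_zero, Fin.val_one,
      Nat.cast_zero, Nat.cast_one]
  · exact HypG'.t_braid_s _ hj
  · exact HypG'.s_braid_s hp
  · simpa only [Commute, SemiconjBy, mul_assoc] using (HypG'.commute_elliptic hj).symm
  · exact HypG'.s_commute_s hne hij hji
  · exact HypG'.t_commute_s _ hj
  · exact HypG'.t_sq _
  · exact HypG'.s_sq _

def toHypGOnGen : GenG' → HypG :=
  Sum.elim (dihedralReflection (HypG.t 0) (HypG.t 1)) HypG.s

theorem lift_toHypGOnGen_eq_one : ∀ r ∈ relsHypG', FreeGroup.lift toHypGOnGen r = 1 := by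
  rintro r ((⟨i, j, hj, rfl⟩ | ⟨i, j, rfl⟩ | ⟨p, hp, rfl⟩ | ⟨i, j, hne, hij, hji, rfl⟩ |
    ⟨i, j, hj, rfl⟩) | ⟨i | j, rfl⟩) <;>
    simp only [br, cm, tG', sG', map_mul, map_inv, map_pow, FreeGroup.lift_apply_of,
      toHypGOnGen, Sum.elim_inl, Sum.elim_inr, inv_mul_eq_one]
  · exact dihedralReflection_braid (HypG.t_sq 0) (HypG.t_sq 1) (HypG.s_sq j)
      (HypG.t_braid_s 0 hj) (HypG.t_braid_s 1 hj) (HypG.commute_elliptic hj) i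
  · rw [dihedralReflection_mul_dihedralReflection (HypG.t_sq 0) (HypG.t_sq 1),
      dihedralReflection_mul_dihedralReflection (HypG.t_sq 0) (HypG.t_sq 1), sub_sub_cancel,
      sub_sub_cancel]
  · exact HypG.s_braid_s hp
  · exact HypG.s_commute_s hne hij hji
  · exact Commute.dihedralReflection_left (HypG.t_commute_s 0 hj) (HypG.t_commute_s 1 hj) i
  · exact dihedralReflection_sq (HypG.t_sq 0) (HypG.t_sq 1) i
  · exact HypG.s_sq j

def toHypG' : HypG →* HypG' := PresentedGroup.toGroup lift_toHypG'OnGen_eq_one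

def toHypG : HypG' →* HypG := PresentedGroup.toGroup lift_toHypGOnGen_eq_one

theorem toHypG'_t (i : Fin 2) : toHypG' (HypG.t i) = HypG'.t i :=
  PresentedGroup.toGroup.of _

theorem toHypG'_s (j : Fin 7) : toHypG' (HypG.s j) = HypG'.s j :=
  PresentedGroup.toGroup.of _

theorem toHypG_t (i : ℤ) : toHypG (HypG'.t i) = dihedralReflection (HypG.t 0) (HypG.t 1) i :=
  PresentedGroup.toGroup.of _

theorem toHypG_s (j : Fin 7) : toHypG (HypG'.s j) = HypG.s j :=
  PresentedGroup.toGroup.of _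

theorem toHypG_comp_toHypG' : toHypG.comp toHypG' = MonoidHom.id HypG := by
  refine PresentedGroup.ext ?_
  rintro (i | j)
  · change toHypG (toHypG' (HypG.t i)) = HypG.t i
    rw [toHypG'_t]
    fin_cases i
    · exact (toHypG_t 0).trans (dihedralReflection_zero _ _)
    · exact (toHypG_t 1).trans (dihedralReflection_one (HypG.t_sq 0) _)
  · change toHypG (toHypG' (HypG.s j)) = HypG.s j
    rw [toHypG'_s, toHypG_s]

theorem toHypG'_comp_toHypG : toHypG'.comp toHypG = MonoidHom.id HypG' := by
  refine PresentedGroup.ext ?_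
  rintro (i | j)
  · change toHypG' (toHypG (HypG'.t i)) = HypG'.t i
    rw [toHypG_t, map_dihedralReflection, toHypG'_t, toHypG'_t]
    exact (HypG'.t_eq_dihedralReflection i).symm
  · change toHypG' (toHypG (HypG'.s j)) = HypG'.s j
    rw [toHypG_s, toHypG'_s]

theorem Hyp_iso : Nonempty (PresentedGroup relsHypG ≃* PresentedGroup relsHypG') :=
  ⟨toHypG'.toMulEquiv toHypG toHypG_comp_toHypG' toHypG'_comp_toHypG⟩

end EllipticE7Hyp
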